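/- In a tree T with N vertices, if the rumor center is unique, then it coincides with the distance center: the unique vertex maximizing rumor centrality R(·,T) also minimizes distance centrality D(·,T). -/

import Mathlib

noncomputable section

/-- The support (list of vertices) of the unique path from `a` to `b` in a connected graph. -/
def pathSupport {V : Type*} [DecidableEq V] (G : SimpleGraph V) (hG : G.Connected)
    (a b : V) : List V :=
  ((hG.preconnected a b).some.toPath : G.Walk a b).support

/-- `inSub G hG root u x` says that `x` belongs to the subtree rooted at `u`
when the tree `G` is rooted at `root`, i.e. `u` lies on the unique path from `root` to `x`. -/
def inSub {V : Type*} [DecidableEq V] (G : SimpleGraph V) (hG : G.IsTree) (root u x : V) :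
    Prop :=
  u ∈ pathSupport G hG.isConnected root x

/-- `subSize G hG root u` is the number of vertices of the subtree rooted at `u`
with respect to the root `root` (the quantity `T_u^root`). -/
def subSize {V : Type*} [DecidableEq V] (G : SimpleGraph V) (hG : G.IsTree) (root u : V) : ℕ :=
  Nat.card {x : V // inSub G hG root u x}

/-- `permCountOn G S u` is the number of permitted permutations of the vertex set `S`:
bijections `σ : Fin |S| ≃ S` starting at `u` such that every vertex appears after
some already-placed neighbor. -/
def permCountOn {V : Type*} (G : SimpleGraph V) (S : Set V) (u : V) : ℕ :=
  Nat.card {σ : Fin (Nat.card S) ≃ S //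
    (∀ i : Fin (Nat.card S), (i : ℕ) = 0 → (σ i : V) = u) ∧
    ∀ k : Fin (Nat.card S), 0 < (k : ℕ) →
      ∃ j : Fin (Nat.card S), (j : ℕ) < (k : ℕ) ∧ G.Adj (σ j : V) (σ k : V)}

/-- The rumor centrality `R(w,T) = N! / ∏_x T_x^w`. -/
def rumorCent {V : Type*} [Fintype V] [DecidableEq V] (G : SimpleGraph V) (hG : G.IsTree)
    (w : V) : ℚ :=
  (Nat.factorial (Fintype.card V) : ℚ) / ∏ x : V, (subSize G hG w x : ℚ)

/-! In a tree, `u` lies on the path from `r` to `x` exactly when `d(r,u) + d(u,x) = d(r,x)`, which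
turns every statement about subtrees into distance arithmetic. The subtree `T_x^r` only depends on
the first edge of the path from `x` towards `r`, so for an edge `ab` the products `∏_x T_x^a` and
`∏_x T_x^b` differ only in their factors at `a` and `b`: `(∏ T^a) T_a^b = (∏ T^b) T_b^a`, while
`T_a^b + T_b^a = N`. A unique rumor center `v` therefore has `2 T_u^v < N` for every neighbour `u`,
hence `2 T_w^v ≤ N` for every `w ≠ v`. Finally, moving from `y` to a neighbour `w` changes the
distance centrality by `D(w) - D(y) = N - 2 T_w^y`, and `T_w^y = T_w^v` when `y` is the neighbour
of `w` towards `v`; so `D` does not decrease along paths leaving `v`. -/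

open Finset

namespace SimpleGraph

variable {V : Type*} {G : SimpleGraph V}

lemma Connected.exists_adj_dist_eq_add_one (hG : G.Connected) {u w : V} (huw : u ≠ w) :
    ∃ c, G.Adj u c ∧ G.dist u w = G.dist c w + 1 := by
  obtain ⟨p, hp⟩ := hG.exists_walk_length_eq_dist u w
  cases p with
  | nil => exact absurd rfl huw
  | @cons _ c _ huc q =>
    have hq : G.dist c w ≤ q.length := dist_le q
    have htri : G.dist u w ≤ G.dist u c + G.dist c w := hG.dist_triangle
    rw [Walk.length_cons] at hp
    rw [dist_eq_one_iff_adj.2 huc] at htri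
    exact ⟨c, huc, by omega⟩

namespace IsTree

variable (hG : G.IsTree)
include hG

lemma length_eq_dist {a b : V} {p : G.Walk a b} (hp : p.IsPath) : p.length = G.dist a b := by
  obtain ⟨q, hq, hql⟩ := hG.connected.exists_path_of_dist a b
  rw [(hG.existsUnique_path a b).unique hp hq, hql]

lemma mem_support_iff_dist_add_dist {a b y : V} {p : G.Walk a b} (hp : p.IsPath) :
    y ∈ p.support ↔ G.dist a y + G.dist y b = G.dist a b := by
  constructor
  · intro hy
    obtain ⟨q, r, hq, hr, rfl⟩ := hp.mem_support_iff_exists_append.mp hy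
    rw [← hG.length_eq_dist hq, ← hG.length_eq_dist hr, ← hG.length_eq_dist hp,
      Walk.length_append]
  · intro hd
    obtain ⟨q, hq⟩ := hG.connected.exists_walk_length_eq_dist a y
    obtain ⟨r, hr⟩ := hG.connected.exists_walk_length_eq_dist y b
    have hqr : (q.append r).IsPath :=
      (q.append r).isPath_of_length_eq_dist (by rw [Walk.length_append, hq, hr, hd])
    rw [(hG.existsUnique_path a b).unique hp hqr, Walk.mem_support_append_iff]
    exact Or.inl q.end_mem_support

lemma getVert_dist [DecidableEq V] {a b y : V} {p : G.Walk a b} (hp : p.IsPath)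
    (hy : y ∈ p.support) : p.getVert (G.dist a y) = y := by
  rw [← hG.length_eq_dist (hp.takeUntil hy)]
  exact p.getVert_length_takeUntil hy

lemma eq_of_dist_add_dist_eq {a b y z : V} (hy : G.dist a y + G.dist y b = G.dist a b)
    (hz : G.dist a z + G.dist z b = G.dist a b) (hyz : G.dist a y = G.dist a z) : y = z := by
  classical
  obtain ⟨p, hp, -⟩ := hG.connected.exists_path_of_dist a b
  rw [← hG.getVert_dist hp ((hG.mem_support_iff_dist_add_dist hp).2 hy), hyz,
    hG.getVert_dist hp ((hG.mem_support_iff_dist_add_dist hp).2 hz)]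

variable [DecidableEq V]

lemma inSub_iff {r u x : V} : inSub G hG r u x ↔ G.dist r u + G.dist u x = G.dist r x :=
  hG.mem_support_iff_dist_add_dist (Path.isPath _)

lemma subSize_eq_card (r u : V) :
    subSize G hG r u = Nat.card {x // G.dist r u + G.dist u x = G.dist r x} :=
  Nat.card_congr (Equiv.subtypeEquivRight fun _ => hG.inSub_iff)

lemma subSize_pos [Finite V] (r u : V) : 0 < subSize G hG r u := by
  rw [hG.subSize_eq_card]
  have : Nonempty {x // G.dist r u + G.dist u x = G.dist r x} := ⟨⟨u, by simp⟩⟩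
  exact Nat.card_pos

lemma subSize_self [Fintype V] (r : V) : subSize G hG r r = Fintype.card V := by
  rw [hG.subSize_eq_card, ← Nat.card_eq_fintype_card]
  exact Nat.card_congr (Equiv.subtypeUnivEquiv fun x => by simp)

lemma subSize_le_of_dist_add_dist [Finite V] {r u x : V}
    (hd : G.dist r u + G.dist u x = G.dist r x) : subSize G hG r x ≤ subSize G hG r u := by
  rw [hG.subSize_eq_card, hG.subSize_eq_card]
  refine Nat.card_le_card_of_injective _ (Subtype.impEmbedding _ _ fun j hj => ?_).injective
  have : G.dist r j ≤ G.dist r u + G.dist u j := hG.connected.dist_triangle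
  have : G.dist u j ≤ G.dist u x + G.dist x j := hG.connected.dist_triangle
  omega

lemma subSize_of_adj [Fintype V] {a b : V} (h : G.Adj a b) :
    subSize G hG a b = #{j | G.dist b j < G.dist a j} := by
  rw [hG.subSize_eq_card, ← Fintype.card_subtype, ← Nat.card_eq_fintype_card]
  refine Nat.card_congr (Equiv.subtypeEquivRight fun j => ?_)
  rw [dist_eq_one_iff_adj.2 h, G.dist_comm (u := a), G.dist_comm (u := b)]
  have := hG.dist_eq_dist_add_one_of_adj j h
  omega

lemma subSize_add_subSize_of_adj [Fintype V] {a b : V} (h : G.Adj a b) :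
    subSize G hG a b + subSize G hG b a = Fintype.card V := by
  have hcompl : univ.filter (fun j => G.dist a j < G.dist b j) =
      univ.filter (fun j => ¬G.dist b j < G.dist a j) := by
    refine filter_congr fun j _ => ?_
    have := hG.dist_ne_of_adj j h
    rw [G.dist_comm (u := j), G.dist_comm (u := j)] at this
    omega
  rw [hG.subSize_of_adj h, hG.subSize_of_adj h.symm, hcompl, card_filter_add_card_filter_not,
    card_univ]

lemma sum_dist_add_two_mul_subSize [Fintype V] {a b : V} (h : G.Adj a b) :
    ∑ j, G.dist b j + 2 * subSize G hG a b = ∑ j, G.dist a j + Fintype.card V := by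
  rw [hG.subSize_of_adj h, card_filter, mul_sum, ← sum_add_distrib, ← card_univ, card_eq_sum_ones,
    ← sum_add_distrib]
  refine sum_congr rfl fun j _ => ?_
  have := hG.dist_eq_dist_add_one_of_adj j h
  rw [G.dist_comm (u := j), G.dist_comm (u := j)] at this
  split_ifs <;> omega

lemma subSize_eq_of_adj {a b x : V} (h : G.Adj a b) (hx : G.dist a x = G.dist b x + 1)
    (hxb : x ≠ b) : subSize G hG a x = subSize G hG b x := by
  have hab : G.dist a b = 1 := dist_eq_one_iff_adj.2 h
  rw [hG.subSize_eq_card, hG.subSize_eq_card]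
  refine Nat.card_congr (Equiv.subtypeEquivRight fun j => ⟨fun hj => ?_, fun hj => ?_⟩)
  · have : G.dist b j ≤ G.dist b x + G.dist x j := hG.connected.dist_triangle
    have : G.dist a j ≤ G.dist a b + G.dist b j := hG.connected.dist_triangle
    omega
  · rcases hG.dist_eq_dist_add_one_of_adj j h with hj' | hj'
    · rw [G.dist_comm (u := j), G.dist_comm (u := j)] at hj'
      omega
    -- otherwise `a` and the neighbour `c` of `b` towards `x` both lie on the geodesic from `b`
    -- to `j` at distance one from `b`, so `c = a`, contradicting `hx`
    exfalso
    rw [G.dist_comm (u := j), G.dist_comm (u := j)] at hj'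
    obtain ⟨c, hbc, hc⟩ := hG.connected.exists_adj_dist_eq_add_one hxb.symm
    have hbc' : G.dist b c = 1 := dist_eq_one_iff_adj.2 hbc
    have hba : G.dist b a = 1 := dist_eq_one_iff_adj.2 h.symm
    have : G.dist c j ≤ G.dist c x + G.dist x j := hG.connected.dist_triangle
    have : G.dist b j ≤ G.dist b c + G.dist c j := hG.connected.dist_triangle
    have hca : c = a := hG.eq_of_dist_add_dist_eq (a := b) (b := j) (by omega) (by omega) (by omega)
    subst hca
    omega

lemma subSize_eq_of_dist_add_dist {r u x : V} (hd : G.dist r u + G.dist u x = G.dist r x)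
    (hux : u ≠ x) : subSize G hG r x = subSize G hG u x := by
  obtain ⟨n, hn⟩ : ∃ n, G.dist r u = n := ⟨_, rfl⟩
  induction n generalizing r with
  | zero => rw [hG.connected.dist_eq_zero_iff.1 hn]
  | succ n ih =>
    have hru : r ≠ u := by rintro rfl; simp at hn
    obtain ⟨s, hrs, hs⟩ := hG.connected.exists_adj_dist_eq_add_one hru
    have hrs' : G.dist r s = 1 := dist_eq_one_iff_adj.2 hrs
    have hux' : G.dist u x ≠ 0 := hG.connected.dist_eq_zero_iff.not.2 hux
    have : G.dist r x ≤ G.dist r s + G.dist s x := hG.connected.dist_triangle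
    have : G.dist s x ≤ G.dist s u + G.dist u x := hG.connected.dist_triangle
    have hsx : s ≠ x := hG.connected.dist_eq_zero_iff.not.1 (by omega)
    rw [hG.subSize_eq_of_adj hrs (by omega) hsx.symm, ih (by omega) (by omega)]

lemma prod_subSize_mul_subSize_of_adj [Fintype V] {a b : V} (h : G.Adj a b) :
    (∏ x, subSize G hG a x) * subSize G hG b a = (∏ x, subSize G hG b x) * subSize G hG a b := by
  have hoff : ∀ x ∈ ({a, b} : Finset V)ᶜ, subSize G hG a x = subSize G hG b x := by
    intro x hx
    simp only [mem_compl, mem_insert, mem_singleton, not_or] at hx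
    rcases hG.dist_eq_dist_add_one_of_adj x h with hx' | hx'
    · rw [G.dist_comm (u := x), G.dist_comm (u := x)] at hx'
      exact hG.subSize_eq_of_adj h hx' hx.2
    · rw [G.dist_comm (u := x), G.dist_comm (u := x)] at hx'
      exact (hG.subSize_eq_of_adj h.symm hx' hx.1).symm
  rw [← prod_mul_prod_compl {a, b}, ← prod_mul_prod_compl {a, b} (subSize G hG b),
    prod_pair h.ne, prod_pair h.ne, prod_congr rfl hoff, hG.subSize_self, hG.subSize_self]
  ring

lemma two_mul_subSize_lt_of_prod_lt [Fintype V] {a b : V} (h : G.Adj a b)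
    (hlt : ∏ x, subSize G hG a x < ∏ x, subSize G hG b x) :
    2 * subSize G hG a b < Fintype.card V := by
  have hsum := hG.subSize_add_subSize_of_adj h
  have hprod := hG.prod_subSize_mul_subSize_of_adj h
  have : subSize G hG a b < subSize G hG b a := by
    by_contra! hle
    have := Nat.mul_lt_mul_of_pos_right hlt (hG.subSize_pos b a)
    have := Nat.mul_le_mul_left (∏ x, subSize G hG b x) hle
    linarith
  omega

lemma two_mul_subSize_le_of_forall_adj [Fintype V] {v : V}
    (hv : ∀ u, G.Adj v u → 2 * subSize G hG v u ≤ Fintype.card V) (w : V) (hw : w ≠ v) :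
    2 * subSize G hG v w ≤ Fintype.card V := by
  obtain ⟨c, hvc, hc⟩ := hG.connected.exists_adj_dist_eq_add_one hw.symm
  have := hG.subSize_le_of_dist_add_dist (x := w)
    (by rw [dist_eq_one_iff_adj.2 hvc, hc, add_comm] : G.dist v c + G.dist c w = G.dist v w)
  have := hv c hvc
  omega

lemma sum_dist_le_sum_dist_of_two_mul_subSize_le [Fintype V] {v : V}
    (hv : ∀ w, w ≠ v → 2 * subSize G hG v w ≤ Fintype.card V) (w : V) :
    ∑ j, G.dist v j ≤ ∑ j, G.dist w j := by
  obtain ⟨n, hn⟩ : ∃ n, G.dist w v = n := ⟨_, rfl⟩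
  induction n generalizing w with
  | zero => rw [hG.connected.dist_eq_zero_iff.1 hn]
  | succ n ih =>
    have hwv : w ≠ v := by rintro rfl; simp at hn
    obtain ⟨y, hwy, hy⟩ := hG.connected.exists_adj_dist_eq_add_one hwv
    have hstep := hG.sum_dist_add_two_mul_subSize hwy.symm
    have hbranch : subSize G hG y w = subSize G hG v w := by
      refine (hG.subSize_eq_of_dist_add_dist ?_ hwy.ne').symm
      rw [dist_eq_one_iff_adj.2 hwy.symm, G.dist_comm (u := v), G.dist_comm (u := v), hy]
    have := ih y (by omega)
    have := hv w hwv
    omega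

lemma rumorCent_lt_rumorCent_iff [Fintype V] {w w' : V} :
    rumorCent G hG w < rumorCent G hG w' ↔ ∏ x, subSize G hG w' x < ∏ x, subSize G hG w x := by
  have hpos : ∀ r, (0 : ℚ) < ∏ x, (subSize G hG r x : ℚ) := fun r =>
    prod_pos fun x _ => by exact_mod_cast hG.subSize_pos r x
  rw [rumorCent, rumorCent, div_lt_div_iff_of_pos_left (by positivity) (hpos w) (hpos w')]
  exact_mod_cast Iff.rfl

end IsTree

end SimpleGraph

/-- If the rumor center of a tree is unique, then it is also a distance center:
it minimizes the distance centrality `D(v,T) = ∑_j d(v,j)`. -/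
theorem unique_rumor_center_eq_distance_center {V : Type*} [Fintype V] [DecidableEq V]
    (G : SimpleGraph V) (hG : G.IsTree) (v : V)
    (hmax : ∀ w : V, rumorCent G hG w ≤ rumorCent G hG v)
    (huniq : ∀ w : V, (∀ x : V, rumorCent G hG x ≤ rumorCent G hG w) → w = v) :
    ∀ w : V, (∑ j : V, G.dist v j) ≤ ∑ j : V, G.dist w j := by
  have hprod (u : V) (hu : u ≠ v) : ∏ x, subSize G hG v x < ∏ x, subSize G hG u x :=
    hG.rumorCent_lt_rumorCent_iff.1 <|
      (hmax u).lt_of_ne fun heq => hu <| huniq u fun x => heq ▸ hmax x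
  exact hG.sum_dist_le_sum_dist_of_two_mul_subSize_le <| hG.two_mul_subSize_le_of_forall_adj
    fun u hu => (hG.two_mul_subSize_lt_of_prod_lt hu (hprod u hu.ne')).le
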